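/- arXiv:1903.11411 — 2 statements merged into one kernel-verified Lean document; each statement's English description precedes it below -/
import Mathlib

section
/- For every n ≥ 3, Toucher has a strategy in the Toucher-Isolator game on the cycle C_n which guarantees that the number of untouched vertices at the end of the game is at most n/4. In particular, u(C_n) ≤ n/4. -/
namespace ToucherIsolator

/-- A strategy for a player in the Toucher-Isolator game: given the history of
previously claimed edges (most recent first), it produces the next edge to claim. -/
def Strategy (V : Type*) : Type _ := List (Sym2 V) → Sym2 V

variable {V : Type*}

/-- The number of edges of `G`. -/
noncomputable def edgeCard (G : SimpleGraph V) : ℕ := Nat.card G.edgeSet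

/-- `history turn t i n` is the list of the first `n` claimed edges (most recent
first) when the player moving at step `m` is Toucher iff `turn m = true`,
Toucher plays strategy `t` and Isolator plays strategy `i`. -/
def history (turn : ℕ → Bool) (t i : Strategy V) : ℕ → List (Sym2 V)
  | 0 => []
  | n + 1 =>
      (if turn n then t (history turn t i n) else i (history turn t i n))
        :: history turn t i n

/-- The edge claimed at step `n` of the game. -/
def moveAt (turn : ℕ → Bool) (t i : Strategy V) (n : ℕ) : Sym2 V :=
  if turn n then t (history turn t i n) else i (history turn t i n)

/-- A strategy is legal on `G` if, whenever the history so far consists of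
distinct edges of `G` and some edge of `G` is still unclaimed, it claims a
previously unclaimed edge of `G`. -/
def Legal (G : SimpleGraph V) (s : Strategy V) : Prop :=
  ∀ h : List (Sym2 V), h.Nodup → (∀ e ∈ h, e ∈ G.edgeSet) →
    h.length < edgeCard G → s h ∈ G.edgeSet ∧ s h ∉ h

/-- The set of vertices untouched at the end of the game, i.e. incident to no
edge claimed by Toucher during the `edgeCard G` moves of the game. -/
def untouchedSet (G : SimpleGraph V) (turn : ℕ → Bool) (t i : Strategy V) : Set V :=
  { v | ∀ n < edgeCard G, turn n = true → v ∉ moveAt turn t i n }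

/-- The number of untouched vertices at the end of the game. -/
noncomputable def untouchedCount (G : SimpleGraph V) (turn : ℕ → Bool)
    (t i : Strategy V) : ℕ :=
  Nat.card (untouchedSet G turn t i)

/-- The standard turn order: Toucher moves first and the players alternate. -/
def std (n : ℕ) : Bool := n % 2 = 0

end ToucherIsolator

/-!
Toucher opens with `e₀ = {0, 1}` and pairs the other edges `e_j = {j, j + 1}` of the cycle as
`{e₁, e₂}, {e₃, e₄}, …`, answering each Isolator move with the partner edge. Then Isolator never
owns both edges of a pair, so an untouched vertex `v` is neither `0` nor `1`, is odd (otherwise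
`e_{v-1}, e_v` is a pair), and `v + 2` is touched (`e_v, e_{v+1}` is a pair). Odd numbers in
`[3, n)` no two of which differ by `2` number at most `n / 4`.
-/

namespace ToucherIsolator

open SimpleGraph

variable {V : Type*} {G : SimpleGraph V} {turn : ℕ → Bool} {t i : Strategy V}

theorem history_succ (m : ℕ) :
    history turn t i (m + 1) = moveAt turn t i m :: history turn t i m := rfl

theorem history_eq_reverse_map_range (m : ℕ) :
    history turn t i m = ((List.range m).map (moveAt turn t i)).reverse := by
  induction m with
  | zero => rfl
  | succ m ih =>
    rw [history_succ, ih, List.range_succ, List.map_append, List.reverse_append]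
    rfl

theorem length_history (m : ℕ) : (history turn t i m).length = m := by
  simp [history_eq_reverse_map_range]

theorem mem_history {m : ℕ} {f : Sym2 V} :
    f ∈ history turn t i m ↔ ∃ k < m, moveAt turn t i k = f := by
  simp [history_eq_reverse_map_range]

theorem edgeCard_le_length {l : List (Sym2 V)} (hl : G.edgeSet ⊆ {e | e ∈ l}) :
    edgeCard G ≤ l.length := by
  classical
  calc edgeCard G = G.edgeSet.ncard := rfl
    _ ≤ (l.toFinset : Set (Sym2 V)).ncard := Set.ncard_le_ncard (by simpa using hl)
    _ ≤ l.length := by rw [Set.ncard_coe_finset]; exact List.toFinset_card_le l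

theorem length_le_edgeCard [Finite G.edgeSet] {l : List (Sym2 V)} (hl : l.Nodup)
    (hlG : ∀ e ∈ l, e ∈ G.edgeSet) : l.length ≤ edgeCard G := by
  classical
  calc l.length = (l.toFinset : Set (Sym2 V)).ncard := by
        rw [Set.ncard_coe_finset, List.toFinset_card_of_nodup hl]
    _ ≤ G.edgeSet.ncard :=
        Set.ncard_le_ncard (fun e he => hlG e (by simpa using he)) (Set.toFinite _)
    _ = edgeCard G := rfl

theorem exists_mem_edgeSet_notMem {h : List (Sym2 V)} (hlen : h.length < edgeCard G) :
    ∃ f ∈ G.edgeSet, f ∉ h := by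
  by_contra! hcov
  exact hlen.not_ge (edgeCard_le_length hcov)

section LegalPlay

variable (ht : Legal G t) (hi : Legal G i)
include ht hi

theorem history_nodup_and_mem_edgeSet {m : ℕ} (hm : m ≤ edgeCard G) :
    (history turn t i m).Nodup ∧ ∀ e ∈ history turn t i m, e ∈ G.edgeSet := by
  induction m with
  | zero => simp [history]
  | succ m ih =>
    obtain ⟨hnd, hG⟩ := ih (by omega)
    have hlen : (history turn t i m).length < edgeCard G := by
      rw [length_history]; omega
    have hmove : moveAt turn t i m ∈ G.edgeSet ∧ moveAt turn t i m ∉ history turn t i m := by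
      unfold moveAt
      split
      · exact ht _ hnd hG hlen
      · exact hi _ hnd hG hlen
    rw [history_succ, List.nodup_cons, List.forall_mem_cons]
    exact ⟨⟨hmove.2, hnd⟩, hmove.1, hG⟩

theorem moveAt_mem_edgeSet {k : ℕ} (hk : k < edgeCard G) : moveAt turn t i k ∈ G.edgeSet :=
  (history_nodup_and_mem_edgeSet ht hi hk).2 _ List.mem_cons_self

theorem moveAt_injOn : Set.InjOn (moveAt turn t i) (Set.Iio (edgeCard G)) := by
  intro j hj k hk h
  have hnd := (history_nodup_and_mem_edgeSet ht hi (turn := turn) le_rfl).1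
  rw [history_eq_reverse_map_range, List.nodup_reverse] at hnd
  exact List.inj_on_of_nodup_map hnd (List.mem_range.2 hj) (List.mem_range.2 hk) h

theorem exists_moveAt_eq [Finite G.edgeSet] {f : Sym2 V} (hf : f ∈ G.edgeSet) :
    ∃ k < edgeCard G, moveAt turn t i k = f := by
  rw [← mem_history]
  by_contra hfree
  obtain ⟨hnd, hG⟩ := history_nodup_and_mem_edgeSet ht hi (turn := turn) le_rfl
  have := length_le_edgeCard (List.nodup_cons.2 ⟨hfree, hnd⟩) (List.forall_mem_cons.2 ⟨hf, hG⟩)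
  rw [List.length_cons, length_history] at this
  omega

end LegalPlay

theorem std_succ_of_eq_false {k : ℕ} (h : std k = false) : std (k + 1) = true := by
  simp only [std, decide_eq_false_iff_not, decide_eq_true_eq] at *
  omega

theorem ne_zero_of_std_eq_false {k : ℕ} (h : std k = false) : k ≠ 0 := by
  rintro rfl
  exact Bool.false_ne_true h.symm

structure IsPairing (G : SimpleGraph V) (e₀ : Sym2 V) (r : Sym2 V → Sym2 V) : Prop where
  opening_mem : e₀ ∈ G.edgeSet
  mem_edgeSet : ∀ f ∈ G.edgeSet, r f ∈ G.edgeSet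
  ne_self : ∀ f ∈ G.edgeSet, r f ≠ f
  involutive : ∀ f ∈ G.edgeSet, f ≠ e₀ → r (r f) = f

open Classical in
noncomputable def pairingStrategy (G : SimpleGraph V) (e₀ : Sym2 V) (r : Sym2 V → Sym2 V) :
    Strategy V := fun h =>
  if h.head?.elim e₀ r ∈ G.edgeSet ∧ h.head?.elim e₀ r ∉ h then h.head?.elim e₀ r
  else if hfree : ∃ f ∈ G.edgeSet, f ∉ h then hfree.choose else e₀

section Pairing

variable {e₀ : Sym2 V} {r : Sym2 V → Sym2 V}

theorem pairingStrategy_legal : Legal G (pairingStrategy G e₀ r) := by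
  intro h _ _ hlen
  unfold pairingStrategy
  split_ifs with hnext hfree
  · exact hnext
  · exact hfree.choose_spec
  · exact absurd (exists_mem_edgeSet_notMem hlen) hfree

theorem pairingStrategy_of_free {h : List (Sym2 V)} (hG : h.head?.elim e₀ r ∈ G.edgeSet)
    (hfree : h.head?.elim e₀ r ∉ h) : pairingStrategy G e₀ r h = h.head?.elim e₀ r :=
  if_pos ⟨hG, hfree⟩

theorem moveAt_pairingStrategy_zero (he₀ : e₀ ∈ G.edgeSet) :
    moveAt std (pairingStrategy G e₀ r) i 0 = e₀ :=
  pairingStrategy_of_free (h := []) he₀ List.not_mem_nil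

theorem moveAt_pairingStrategy_succ {k : ℕ} (hk : std k = false)
    (hG : r (moveAt std (pairingStrategy G e₀ r) i k) ∈ G.edgeSet)
    (hfree : r (moveAt std (pairingStrategy G e₀ r) i k) ∉
      history std (pairingStrategy G e₀ r) i (k + 1)) :
    moveAt std (pairingStrategy G e₀ r) i (k + 1) =
      r (moveAt std (pairingStrategy G e₀ r) i k) := by
  rw [moveAt, if_pos (std_succ_of_eq_false hk)]
  exact pairingStrategy_of_free hG hfree

namespace IsPairing

variable [Finite G.edgeSet] (hr : IsPairing G e₀ r) (hi : Legal G i)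
include hr hi

omit [Finite G.edgeSet] in
theorem moveAt_ne_opening {k : ℕ} (hk : k < edgeCard G) (hk0 : k ≠ 0) :
    moveAt std (pairingStrategy G e₀ r) i k ≠ e₀ := by
  have h0 := moveAt_pairingStrategy_zero hr.opening_mem (i := i) (r := r)
  exact fun h => hk0 <|
    moveAt_injOn pairingStrategy_legal hi hk (show 0 < edgeCard G by omega) (h.trans h0.symm)

/-- Every Isolator move `f` is answered, at some point of the game, by a Toucher move `r f`:
right away if `r f` is still free, and earlier otherwise, since Isolator cannot own `r f`
without Toucher owning `r (r f) = f`. -/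
theorem exists_answer (k : ℕ) (hk : k < edgeCard G) (hturn : std k = false) :
    ∃ k' < edgeCard G, std k' = true ∧
      moveAt std (pairingStrategy G e₀ r) i k' = r (moveAt std (pairingStrategy G e₀ r) i k) := by
  induction k using Nat.strong_induction_on with
  | _ k ih =>
  set M := moveAt std (pairingStrategy G e₀ r) i
  have ht : Legal G (pairingStrategy G e₀ r) := pairingStrategy_legal
  have hMk : M k ∈ G.edgeSet := moveAt_mem_edgeSet ht hi hk
  by_cases hclaimed : r (M k) ∈ history std (pairingStrategy G e₀ r) i (k + 1)
  · obtain ⟨k', hk', hk'eq⟩ := mem_history.1 hclaimed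
    change M k' = r (M k) at hk'eq
    have hk'k : k' ≠ k := by
      rintro rfl
      exact hr.ne_self _ hMk hk'eq.symm
    cases hturn' : std k'
    · obtain ⟨k'', hk'', hturn'', hk''eq⟩ := ih k' (by omega) (by omega) hturn'
      rw [hk'eq, hr.involutive _ hMk (hr.moveAt_ne_opening hi hk (ne_zero_of_std_eq_false hturn))]
        at hk''eq
      obtain rfl := moveAt_injOn ht hi hk'' hk hk''eq
      exact absurd (hturn''.symm.trans hturn) (by decide)
    · exact ⟨k', by omega, hturn', hk'eq⟩
  · obtain ⟨k'', hk'', hk''eq⟩ := exists_moveAt_eq ht hi (turn := std) (hr.mem_edgeSet _ hMk)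
    have hlate : k + 1 ≤ k'' := by
      by_contra! hearly
      exact hclaimed (mem_history.2 ⟨k'', hearly, hk''eq⟩)
    exact ⟨k + 1, by omega, std_succ_of_eq_false hturn,
      moveAt_pairingStrategy_succ hturn (hr.mem_edgeSet _ hMk) hclaimed⟩

omit hi in
theorem notMem_untouchedSet_of_mem_opening {v : V} (hv : v ∈ e₀) :
    v ∉ untouchedSet G std (pairingStrategy G e₀ r) i := by
  have : Nonempty G.edgeSet := ⟨⟨e₀, hr.opening_mem⟩⟩
  intro hvS
  refine hvS 0 Nat.card_pos rfl ?_
  rwa [moveAt_pairingStrategy_zero hr.opening_mem]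

theorem notMem_untouchedSet_of_mem_response {f : Sym2 V} (hf : f ∈ G.edgeSet) {v w : V}
    (hv : v ∈ f) (hw : w ∈ r f) (hvS : v ∈ untouchedSet G std (pairingStrategy G e₀ r) i) :
    w ∉ untouchedSet G std (pairingStrategy G e₀ r) i := by
  obtain ⟨k, hk, rfl⟩ :=
    exists_moveAt_eq (pairingStrategy_legal (e₀ := e₀) (r := r)) hi (turn := std) hf
  cases hturn : std k
  · obtain ⟨k', hk', hturn', hk'eq⟩ := hr.exists_answer hi k hk hturn
    exact fun hwS => hwS k' hk' hturn' (hk'eq ▸ hw)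
  · exact absurd hv (hvS k hk hturn)

end IsPairing

end Pairing

/-- `a ↦ (a + 1) / 4` maps the odd numbers `4q - 1` and `4q + 1` to `q`. -/
theorem ncard_le_div_four_of_forall_odd {n : ℕ} {s : Set ℕ}
    (hs : ∀ a ∈ s, Odd a ∧ 2 ≤ a ∧ a < n) (hgap : ∀ a ∈ s, a + 2 ∉ s) : s.ncard ≤ n / 4 := by
  calc s.ncard ≤ (Set.Icc 1 (n / 4)).ncard := by
        refine Set.ncard_le_ncard_of_injOn (fun a => (a + 1) / 4) ?_ ?_
        · intro a ha
          obtain ⟨hodd, h2, hlt⟩ := hs a ha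
          rw [Nat.odd_iff] at hodd
          simp only [Set.mem_Icc]
          omega
        · intro a ha b hb hab
          obtain ⟨hodda, -⟩ := hs a ha
          obtain ⟨hoddb, -⟩ := hs b hb
          rw [Nat.odd_iff] at hodda hoddb
          have hab : (a + 1) / 4 = (b + 1) / 4 := hab
          by_contra hne
          rcases (show a + 2 = b ∨ b + 2 = a by omega) with rfl | rfl
          · exact hgap a ha hb
          · exact hgap b hb ha
    _ = n / 4 := by simp

section Cycle

variable {n : ℕ} [NeZero n]

theorem val_one_of_two_le (hn : 2 ≤ n) : (1 : Fin n).val = 1 := by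
  rw [Fin.val_one']
  exact Nat.mod_eq_of_lt hn

theorem not_odd_val_add_one (hn : 2 ≤ n) {j : Fin n} (hj : Odd j.val) : ¬Odd (j + 1).val := by
  rw [Fin.val_add, val_one_of_two_le hn, Nat.not_odd_iff_even]
  rcases Nat.lt_or_ge (j.val + 1) n with h | h
  · rw [Nat.mod_eq_of_lt h]
    exact hj.add_one
  · rw [show j.val + 1 = n by omega, Nat.mod_self]
    exact ⟨0, rfl⟩

def cycleEdge (j : Fin n) : Sym2 (Fin n) := s(j, j + 1)

/-- For odd `n` the last pair wraps around: `e₀ ↦ e_{n-1} ↦ e_{n-2}`, so `partner` is an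
involution only away from `0`. -/
def partner (j : Fin n) : Fin n := if Odd j.val then j + 1 else j - 1

theorem partner_ne (hn : 2 ≤ n) (j : Fin n) : partner j ≠ j := by
  have h10 : (1 : Fin n) ≠ 0 := fun h => by
    have := congrArg Fin.val h
    rw [val_one_of_two_le hn, Fin.val_zero] at this
    exact one_ne_zero this
  unfold partner
  split_ifs
  · rwa [Ne, add_eq_left]
  · rwa [Ne, sub_eq_self]

theorem partner_partner (hn : 2 ≤ n) {j : Fin n} (hj : j ≠ 0) : partner (partner j) = j := by
  unfold partner
  by_cases hodd : Odd j.val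
  · rw [if_pos hodd, if_neg (not_odd_val_add_one hn hodd), add_sub_cancel_right]
  · have hpos : j.val ≠ 0 := Fin.val_ne_iff.2 hj
    have hodd' : Odd (j - 1).val := by
      rw [Fin.val_sub_one_of_ne_zero hj, Nat.odd_iff]
      rw [Nat.not_odd_iff_even, Nat.even_iff] at hodd
      omega
    rw [if_neg hodd, if_pos hodd', sub_add_cancel]

theorem cycleEdge_mem_edgeSet (hn : 2 ≤ n) (j : Fin n) :
    cycleEdge j ∈ (cycleGraph n).edgeSet := by
  rw [cycleEdge, mem_edgeSet, cycleGraph_adj', add_sub_cancel_left, val_one_of_two_le hn]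
  exact Or.inr rfl

theorem exists_cycleEdge_eq (hn : 2 ≤ n) {f : Sym2 (Fin n)} (hf : f ∈ (cycleGraph n).edgeSet) :
    ∃ j, cycleEdge j = f := by
  induction f using Sym2.ind with
  | _ u v =>
  have eq_add_one (a b : Fin n) (h : (a - b).val = 1) : a = b + 1 :=
    sub_eq_iff_eq_add'.1 (Fin.ext (h.trans (val_one_of_two_le hn).symm))
  rcases (cycleGraph_adj').1 hf with h | h
  · exact ⟨v, by rw [cycleEdge, eq_add_one u v h, Sym2.eq_swap]⟩
  · exact ⟨u, by rw [cycleEdge, eq_add_one v u h]⟩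

theorem cycleEdge_injective (hn : 3 ≤ n) : Function.Injective (cycleEdge (n := n)) := by
  intro j k h
  rcases Sym2.eq_iff.1 h with ⟨hjk, -⟩ | ⟨hjk, hkj⟩
  · exact hjk
  · have h2 : k + (1 + 1) = k + 0 := by rw [add_zero, ← add_assoc, ← hjk, hkj]
    have := congrArg Fin.val (add_left_cancel h2)
    rw [Fin.val_add, val_one_of_two_le (by omega), Fin.val_zero, Nat.mod_eq_of_lt hn] at this
    omega

noncomputable def cycleResponse (f : Sym2 (Fin n)) : Sym2 (Fin n) :=
  cycleEdge (partner (Function.invFun cycleEdge f))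

theorem cycleResponse_cycleEdge (hn : 3 ≤ n) (j : Fin n) :
    cycleResponse (cycleEdge j) = cycleEdge (partner j) := by
  rw [cycleResponse, Function.leftInverse_invFun (cycleEdge_injective hn)]

theorem isPairing_cycleResponse (hn : 3 ≤ n) :
    IsPairing (cycleGraph n) (cycleEdge 0) cycleResponse where
  opening_mem := cycleEdge_mem_edgeSet (by omega) 0
  mem_edgeSet _ _ := cycleEdge_mem_edgeSet (by omega) _
  ne_self f hf := by
    obtain ⟨j, rfl⟩ := exists_cycleEdge_eq (by omega) hf
    rw [cycleResponse_cycleEdge hn, (cycleEdge_injective hn).ne_iff]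
    exact partner_ne (by omega) j
  involutive f hf hf0 := by
    obtain ⟨j, rfl⟩ := exists_cycleEdge_eq (by omega) hf
    have hj : j ≠ 0 := by rintro rfl; exact hf0 rfl
    rw [cycleResponse_cycleEdge hn, cycleResponse_cycleEdge hn, partner_partner (by omega) hj]

noncomputable abbrev cycleStrategy (n : ℕ) [NeZero n] : Strategy (Fin n) :=
  pairingStrategy (cycleGraph n) (cycleEdge 0) cycleResponse

variable (hn : 3 ≤ n) {i : Strategy (Fin n)} (hi : Legal (cycleGraph n) i)
include hn hi

omit hi in
theorem two_le_val_of_mem_untouchedSet {v : Fin n}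
    (hv : v ∈ untouchedSet (cycleGraph n) std (cycleStrategy n) i) : 2 ≤ v.val := by
  have touched :
      ∀ u ∈ cycleEdge (0 : Fin n), u ∉ untouchedSet (cycleGraph n) std (cycleStrategy n) i :=
    fun _ hu => (isPairing_cycleResponse hn).notMem_untouchedSet_of_mem_opening hu
  have h0 : v.val ≠ 0 := fun h => touched v
    (by rw [show v = 0 from Fin.ext h]; exact Sym2.mem_mk_left _ _) hv
  have h1 : v.val ≠ 1 := fun h => touched (0 + 1) (Sym2.mem_mk_right _ _)
    (by rwa [zero_add, ← Fin.ext (h.trans (val_one_of_two_le (by omega)).symm)])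
  omega

theorem odd_val_of_mem_untouchedSet {v : Fin n}
    (hv : v ∈ untouchedSet (cycleGraph n) std (cycleStrategy n) i) : Odd v.val := by
  by_contra heven
  have hv0 : v ≠ 0 := fun h => by simpa [h] using two_le_val_of_mem_untouchedSet hn hv
  have hodd : Odd (v - 1).val := by
    have := two_le_val_of_mem_untouchedSet hn hv
    rw [Fin.val_sub_one_of_ne_zero hv0, Nat.odd_iff]
    rw [Nat.not_odd_iff_even, Nat.even_iff] at heven
    omega
  have hpartner : partner (v - 1) = v := by rw [partner, if_pos hodd, sub_add_cancel]
  refine (isPairing_cycleResponse hn).notMem_untouchedSet_of_mem_response hi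
    (cycleEdge_mem_edgeSet (by omega) (v - 1)) (v := v) ?_ ?_ hv hv
  · rw [cycleEdge, sub_add_cancel]
    exact Sym2.mem_mk_right _ _
  · rw [cycleResponse_cycleEdge hn, hpartner]
    exact Sym2.mem_mk_left _ _

theorem val_ne_val_add_two_of_mem_untouchedSet {v w : Fin n}
    (hv : v ∈ untouchedSet (cycleGraph n) std (cycleStrategy n) i)
    (hw : w ∈ untouchedSet (cycleGraph n) std (cycleStrategy n) i) : w.val ≠ v.val + 2 := by
  intro hvw
  have hpartner : partner v = v + 1 := if_pos (odd_val_of_mem_untouchedSet hn hi hv)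
  have hw' : w = v + 1 + 1 := by
    have hv1 : (v + 1).val = v.val + 1 := Fin.val_add_one_of_lt' (by omega)
    ext
    rw [Fin.val_add_one_of_lt' (by omega), hv1, hvw]
  refine (isPairing_cycleResponse hn).notMem_untouchedSet_of_mem_response hi
    (cycleEdge_mem_edgeSet (by omega) v) (Sym2.mem_mk_left _ _) ?_ hv hw
  rw [cycleResponse_cycleEdge hn, hpartner, hw']
  exact Sym2.mem_mk_right _ _

end Cycle

end ToucherIsolator

open ToucherIsolator SimpleGraph

/-- Theorem 4 (upper bound): on the cycle `Cₙ`, Toucher can guarantee at most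
`n/4` untouched vertices. -/
theorem toucher_guarantee_cycle
    (n : ℕ) (hn : 3 ≤ n) :
    ∃ t : Strategy (Fin n), Legal (cycleGraph n) t ∧
      ∀ i : Strategy (Fin n), Legal (cycleGraph n) i →
        (untouchedCount (cycleGraph n) std t i : ℝ) ≤ (n : ℝ) / 4 := by
  have : NeZero n := ⟨by omega⟩
  refine ⟨cycleStrategy n, pairingStrategy_legal, fun i hi => ?_⟩
  have hcount : untouchedCount (cycleGraph n) std (cycleStrategy n) i ≤ n / 4 := by
    rw [untouchedCount, Nat.card_coe_set_eq, ← Set.ncard_image_of_injective _ Fin.val_injective]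
    refine ncard_le_div_four_of_forall_odd ?_ ?_
    · rintro _ ⟨v, hv, rfl⟩
      exact ⟨odd_val_of_mem_untouchedSet hn hi hv, two_le_val_of_mem_untouchedSet hn hv, v.isLt⟩
    · rintro _ ⟨v, hv, rfl⟩ ⟨w, hw, hvw⟩
      exact val_ne_val_add_two_of_mem_untouchedSet hn hi hv hw hvw
  exact (Nat.cast_le.2 hcount).trans Nat.cast_div_le
end

section
/- For every n ≥ 2, Toucher has a strategy in the Toucher-Isolator game on the path P_n which guarantees that the number of untouched vertices at the end of the game is at most (n + 1)/4. In particular, u(P_n) ≤ (n+1)/4. -/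
open ToucherIsolator SimpleGraph

namespace TIPath

variable {n : ℕ}

/-- The `k`-th edge of the path graph. -/
def ed (hn : 2 ≤ n) (k : ℕ) : Sym2 (Fin n) :=
  if h : k + 1 < n then s(⟨k, by omega⟩, ⟨k + 1, h⟩) else s(⟨0, by omega⟩, ⟨1, by omega⟩)

lemma ed_of_lt (hn : 2 ≤ n) {k : ℕ} (hk : k + 1 < n) :
    ed hn k = s(⟨k, by omega⟩, ⟨k + 1, hk⟩) := dif_pos hk

lemma ed_mem_edgeSet (hn : 2 ≤ n) {k : ℕ} (hk : k + 1 < n) :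
    ed hn k ∈ (pathGraph n).edgeSet := by
  rw [ed_of_lt hn hk, mem_edgeSet, pathGraph_adj]
  left; rfl

lemma mem_ed_iff (hn : 2 ≤ n) {k : ℕ} (hk : k + 1 < n) (v : Fin n) :
    v ∈ ed hn k ↔ (v.val = k ∨ v.val = k + 1) := by
  rw [ed_of_lt hn hk]
  simp [Sym2.mem_iff, Fin.ext_iff]

lemma ed_inj (hn : 2 ≤ n) {k l : ℕ} (hk : k + 1 < n) (hl : l + 1 < n)
    (h : ed hn k = ed hn l) : k = l := by
  rw [ed_of_lt hn hk, ed_of_lt hn hl, Sym2.eq_iff] at h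
  rcases h with ⟨h1, h2⟩ | ⟨h1, h2⟩ <;>
    simp only [Fin.mk.injEq] at h1 h2 <;> omega

lemma edge_iff (hn : 2 ≤ n) (e : Sym2 (Fin n)) :
    e ∈ (pathGraph n).edgeSet ↔ ∃ k, k + 1 < n ∧ e = ed hn k := by
  constructor
  · induction e using Sym2.ind with
    | _ a b =>
      rw [mem_edgeSet, pathGraph_adj]
      rintro (hab | hab)
      · refine ⟨a.val, by omega, ?_⟩
        rw [ed_of_lt hn (by omega)]
        rw [Sym2.eq_iff]
        left
        constructor <;> [exact Fin.ext rfl; exact (Fin.ext hab.symm)]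
      · refine ⟨b.val, by omega, ?_⟩
        rw [ed_of_lt hn (by omega)]
        rw [Sym2.eq_iff]
        right
        constructor <;> [exact (Fin.ext hab.symm); exact Fin.ext rfl]
  · rintro ⟨k, hk, rfl⟩
    exact ed_mem_edgeSet hn hk

lemma edgeCard_path (hn : 2 ≤ n) : edgeCard (pathGraph n) = n - 1 := by
  have hset : (pathGraph n).edgeSet = Set.range (fun j : Fin (n - 1) => ed hn j.val) := by
    ext e
    rw [edge_iff hn]
    constructor
    · rintro ⟨k, hk, rfl⟩
      exact ⟨⟨k, by omega⟩, rfl⟩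
    · rintro ⟨j, rfl⟩
      exact ⟨j.val, by have := j.isLt; omega, rfl⟩
  rw [edgeCard, hset, Nat.card_range_of_injective, Nat.card_eq_fintype_card,
    Fintype.card_fin]
  intro j j' hjj
  have h1 := j.isLt
  have h2 := j'.isLt
  exact Fin.ext (ed_inj hn (by omega) (by omega) hjj)

/-- Partner of edge index `a` in Toucher's pairing. -/
def par (n a : ℕ) : ℕ := if a % 2 = n % 2 then a - 1 else a + 1

/-- Fallback edge index: the least unclaimed edge. -/
def fb (hn : 2 ≤ n) (h : List (Sym2 (Fin n))) : ℕ :=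
  ((List.range (n - 1)).find? (fun k => !(decide (ed hn k ∈ h)))).getD 0

lemma fb_spec (hn : 2 ≤ n) (h : List (Sym2 (Fin n))) (hnd : h.Nodup)
    (hlen : h.length < n - 1) :
    fb hn h + 1 < n ∧ ed hn (fb hn h) ∉ h := by
  have hex : ∃ k ∈ List.range (n - 1), ed hn k ∉ h := by
    by_contra hc
    push_neg at hc
    have hsub : Finset.image (fun k => ed hn k) (Finset.range (n - 1)) ⊆ h.toFinset := by
      intro e he
      rw [Finset.mem_image] at he
      obtain ⟨k, hk, rfl⟩ := he
      rw [List.mem_toFinset]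
      exact hc k (by simpa using hk)
    have hinj : Set.InjOn (fun k => ed hn k) (Finset.range (n - 1)) := by
      intro a ha b hb hab
      simp only [Finset.coe_range, Set.mem_Iio] at ha hb
      exact ed_inj hn (by omega) (by omega) hab
    have hcard1 : (Finset.image (fun k => ed hn k) (Finset.range (n - 1))).card = n - 1 := by
      rw [Finset.card_image_of_injOn hinj, Finset.card_range]
    have hcard2 := Finset.card_le_card hsub
    have hcard3 : h.toFinset.card = h.length := List.toFinset_card_of_nodup hnd
    omega
  obtain ⟨k, hk1, hk2⟩ := hex
  rcases hfind : (List.range (n - 1)).find? (fun k => !(decide (ed hn k ∈ h))) with _ | j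
  · exfalso
    have := List.find?_eq_none.mp hfind k hk1
    simp only [Bool.not_eq_true', decide_eq_false_iff_not, not_not] at this
    exact hk2 this
  · have h1 := List.find?_some hfind
    have h2 := List.mem_of_find?_eq_some hfind
    simp only [Bool.not_eq_true', decide_eq_false_iff_not] at h1
    rw [List.mem_range] at h2
    have : fb hn h = j := by rw [fb, hfind]; rfl
    rw [this]
    exact ⟨by omega, h1⟩

/-- Toucher's strategy. -/
def tstr (hn : 2 ≤ n) : Strategy (Fin n)
  | [] => ed hn 0
  | e :: rest =>
      let p := par n (Sym2.inf e).val
      if p + 1 < n ∧ ed hn p ∉ (e :: rest) then ed hn p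
      else ed hn (fb hn (e :: rest))

lemma tstr_nil (hn : 2 ≤ n) : tstr hn [] = ed hn 0 := rfl

lemma tstr_cons (hn : 2 ≤ n) (e : Sym2 (Fin n)) (rest : List (Sym2 (Fin n))) :
    tstr hn (e :: rest) =
      if par n (Sym2.inf e).val + 1 < n ∧ ed hn (par n (Sym2.inf e).val) ∉ (e :: rest)
      then ed hn (par n (Sym2.inf e).val) else ed hn (fb hn (e :: rest)) := rfl

lemma tstr_legal (hn : 2 ≤ n) : Legal (pathGraph n) (tstr hn) := by
  intro h hnd hed hlen
  rw [edgeCard_path hn] at hlen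
  cases h with
  | nil =>
    rw [tstr_nil hn]
    exact ⟨ed_mem_edgeSet hn (by omega), by simp⟩
  | cons e rest =>
    rw [tstr_cons hn]
    split
    · next hp => exact ⟨ed_mem_edgeSet hn hp.1, hp.2⟩
    · next =>
      obtain ⟨h1, h2⟩ := fb_spec hn _ hnd hlen
      exact ⟨ed_mem_edgeSet hn h1, h2⟩

lemma inf_ed (hn : 2 ≤ n) {a : ℕ} (ha : a + 1 < n) : (Sym2.inf (ed hn a)).val = a := by
  rw [ed_of_lt hn ha, Sym2.inf_mk]
  have : (⟨a, by omega⟩ : Fin n) ≤ ⟨a + 1, ha⟩ := by simp [Fin.mk_le_mk]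
  rw [inf_eq_left.mpr this]


section Game

variable (hn : 2 ≤ n) (i : Strategy (Fin n))

/-- The moves of the game where Toucher plays `tstr` against `i`. -/
noncomputable def mv (s : ℕ) : Sym2 (Fin n) := moveAt std (tstr hn) i s

noncomputable def hist (m : ℕ) : List (Sym2 (Fin n)) := history std (tstr hn) i m

lemma hist_zero : hist hn i 0 = [] := rfl

lemma hist_succ (m : ℕ) : hist hn i (m + 1) = mv hn i m :: hist hn i m := rfl

lemma hist_len (m : ℕ) : (hist hn i m).length = m := by
  induction m with
  | zero => rfl
  | succ m ih => rw [hist_succ, List.length_cons, ih]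

lemma mem_hist (m : ℕ) (e : Sym2 (Fin n)) :
    e ∈ hist hn i m ↔ ∃ s, s < m ∧ mv hn i s = e := by
  induction m with
  | zero => simp [hist_zero]
  | succ m ih =>
    rw [hist_succ, List.mem_cons, ih]
    constructor
    · rintro (rfl | ⟨s, hs, rfl⟩)
      · exact ⟨m, by omega, rfl⟩
      · exact ⟨s, by omega, rfl⟩
    · rintro ⟨s, hs, rfl⟩
      rcases Nat.lt_succ_iff_lt_or_eq.mp hs with h | rfl
      · exact Or.inr ⟨s, h, rfl⟩
      · exact Or.inl rfl

variable (hi : Legal (pathGraph n) i)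

include hn hi in
lemma hist_good : ∀ m, m ≤ n - 1 →
    (hist hn i m).Nodup ∧ ∀ e ∈ hist hn i m, e ∈ (pathGraph n).edgeSet := by
  intro m
  induction m with
  | zero => simp [hist_zero]
  | succ m ih =>
    intro hm
    obtain ⟨h1, h2⟩ := ih (by omega)
    have hlen : (hist hn i m).length < edgeCard (pathGraph n) := by
      rw [edgeCard_path hn, hist_len]; omega
    have hmv : mv hn i m ∈ (pathGraph n).edgeSet ∧ mv hn i m ∉ hist hn i m := by
      unfold mv moveAt
      by_cases hstd : std m
      · rw [if_pos hstd]
        exact tstr_legal hn _ h1 h2 hlen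
      · rw [if_neg hstd]
        exact hi _ h1 h2 hlen
    rw [hist_succ]
    constructor
    · exact List.nodup_cons.mpr ⟨hmv.2, h1⟩
    · intro e he
      rcases List.mem_cons.mp he with rfl | he
      · exact hmv.1
      · exact h2 e he

include hn hi in
lemma mv_edge {s : ℕ} (hs : s < n - 1) : mv hn i s ∈ (pathGraph n).edgeSet := by
  have := (hist_good hn i hi (s + 1) (by omega)).2
  exact this _ ((mem_hist hn i (s + 1) _).mpr ⟨s, by omega, rfl⟩)

include hn hi in
lemma mv_ne {s s' : ℕ} (hss : s < s') (hs' : s' < n - 1) :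
    mv hn i s ≠ mv hn i s' := by
  intro he
  have hnd := (hist_good hn i hi (s' + 1) (by omega)).1
  rw [hist_succ] at hnd
  have := (List.nodup_cons.mp hnd).1
  exact this ((mem_hist hn i s' _).mpr ⟨s, hss, he⟩)

include hn hi in
lemma mv_ne' {s s' : ℕ} (hss : s ≠ s') (hs : s < n - 1) (hs' : s' < n - 1) :
    mv hn i s ≠ mv hn i s' := by
  rcases lt_or_gt_of_ne hss with h | h
  · exact mv_ne hn i hi h hs'
  · exact fun he => mv_ne hn i hi h hs he.symm

include hn hi in
lemma all_claimed (e : Sym2 (Fin n)) (he : e ∈ (pathGraph n).edgeSet) :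
    ∃ s, s < n - 1 ∧ mv hn i s = e := by
  rw [← mem_hist]
  obtain ⟨hnd, hed⟩ := hist_good hn i hi (n - 1) le_rfl
  have hsub : (hist hn i (n - 1)).toFinset ⊆
      Finset.image (fun k => ed hn k) (Finset.range (n - 1)) := by
    intro x hx
    rw [List.mem_toFinset] at hx
    obtain ⟨k, hk, rfl⟩ := (edge_iff hn x).mp (hed x hx)
    exact Finset.mem_image.mpr ⟨k, Finset.mem_range.mpr (by omega), rfl⟩
  have hcard1 : (hist hn i (n - 1)).toFinset.card = n - 1 := by
    rw [List.toFinset_card_of_nodup hnd, hist_len]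
  have hcard2 : (Finset.image (fun k => ed hn k) (Finset.range (n - 1))).card ≤ n - 1 :=
    le_trans Finset.card_image_le (by rw [Finset.card_range])
  have heq := Finset.eq_of_subset_of_card_le hsub (by omega)
  obtain ⟨k, hk, rfl⟩ := (edge_iff hn e).mp he
  have : ed hn k ∈ (hist hn i (n - 1)).toFinset := by
    rw [heq]
    exact Finset.mem_image.mpr ⟨k, Finset.mem_range.mpr (by omega), rfl⟩
  exact List.mem_toFinset.mp this

include hn hi in
lemma resp : ∀ s, s < n - 1 → s % 2 = 1 → ∀ a b : ℕ, a + 1 < n → b + 1 < n → a ≠ b →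
    par n a = b → par n b = a → mv hn i s = ed hn a →
    ∃ s', s' < n - 1 ∧ s' % 2 = 0 ∧ mv hn i s' = ed hn b := by
  intro s
  induction s using Nat.strong_induction_on with
  | _ s IH =>
  intro hs hodd a b ha hb hab hpab hpba hmv
  have key : ∀ s'', s'' < s → mv hn i s'' = ed hn b →
      ∃ s', s' < n - 1 ∧ s' % 2 = 0 ∧ mv hn i s' = ed hn b := by
    intro s'' hlt hmv''
    by_cases h2 : s'' % 2 = 0
    · exact ⟨s'', by omega, h2, hmv''⟩
    · exfalso
      obtain ⟨s3, hs3, hs3e, hs3mv⟩ :=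
        IH s'' hlt (by omega) (by omega) b a hb ha (Ne.symm hab) hpba hpab hmv''
      have hne : s3 ≠ s := by omega
      exact mv_ne' hn i hi hne hs3 hs (hs3mv.trans hmv.symm)
  by_cases hcase : s + 1 < n - 1
  · -- Toucher answers at step `s + 1`
    have hstd : std (s + 1) = true := by
      simp only [std, decide_eq_true_eq]
      omega
    have hmv1 : mv hn i (s + 1) = tstr hn (hist hn i (s + 1)) := by
      unfold mv moveAt
      rw [if_pos hstd]
      rfl
    have hh : hist hn i (s + 1) = ed hn a :: hist hn i s := by rw [hist_succ, hmv]
    by_cases hin : ed hn b ∈ ed hn a :: hist hn i s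
    · rcases List.mem_cons.mp hin with heq | hin'
      · exact absurd (ed_inj hn hb ha heq) (Ne.symm hab)
      · obtain ⟨s'', hs'', hmv''⟩ := (mem_hist hn i s _).mp hin'
        exact key s'' hs'' hmv''
    · refine ⟨s + 1, hcase, by omega, ?_⟩
      rw [hmv1, hh, tstr_cons hn, inf_ed hn ha, hpab, if_pos ⟨hb, hin⟩]
  · -- `s` is the final move of the game
    obtain ⟨s'', hs'', hmv''⟩ := all_claimed hn i hi (ed hn b) (ed_mem_edgeSet hn hb)
    have hne : s'' ≠ s := by
      rintro rfl
      exact hab (ed_inj hn ha hb (hmv.symm.trans hmv''))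
    exact key s'' (by omega) hmv''

lemma untouched_iff (v : Fin n) :
    v ∈ untouchedSet (pathGraph n) std (tstr hn) i ↔
      ∀ s, s < n - 1 → s % 2 = 0 → v ∉ mv hn i s := by
  unfold untouchedSet
  rw [Set.mem_setOf_eq, edgeCard_path hn]
  constructor
  · intro h s hs he
    exact h s hs (by simp [std, he])
  · intro h s hs he
    refine h s hs ?_
    simpa [std] using he

lemma mv_zero : mv hn i 0 = ed hn 0 := by
  unfold mv moveAt
  rw [if_pos (by simp [std])]
  rfl

include hn hi in
lemma shared_touched {k : ℕ} (hk : k + 2 < n) (hpar : k % 2 ≠ n % 2) (v : Fin n)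
    (hv : v.val = k + 1) : v ∉ untouchedSet (pathGraph n) std (tstr hn) i := by
  have ha : k + 1 < n := by omega
  have hb : k + 1 + 1 < n := by omega
  have hp1 : par n k = k + 1 := by unfold par; rw [if_neg hpar]
  have hp2 : par n (k + 1) = k := by
    unfold par
    rw [if_pos (by omega)]
    omega
  intro hU
  rw [untouched_iff] at hU
  obtain ⟨s, hs, hmv⟩ := all_claimed hn i hi (ed hn k) (ed_mem_edgeSet hn ha)
  have hvk : v ∈ ed hn k := (mem_ed_iff hn ha v).mpr (Or.inr hv)
  by_cases h2 : s % 2 = 0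
  · exact hU s hs h2 (hmv ▸ hvk)
  · obtain ⟨s', hs', hs'e, hmv'⟩ :=
      resp hn i hi s hs (by omega) k (k + 1) ha hb (by omega) hp1 hp2 hmv
    have hvk1 : v ∈ ed hn (k + 1) := (mem_ed_iff hn hb v).mpr (Or.inl hv)
    exact hU s' hs' hs'e (hmv' ▸ hvk1)

include hn hi in
lemma untouched_val {v : Fin n} (hv : v ∈ untouchedSet (pathGraph n) std (tstr hn) i) :
    2 ≤ v.val ∧ v.val % 2 ≠ n % 2 := by
  have hvlt := v.isLt
  have h01 : v ∉ ed hn 0 := by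
    rw [untouched_iff] at hv
    have := hv 0 (by omega) (by omega)
    rw [mv_zero] at this
    exact this
  rw [mem_ed_iff hn (by omega)] at h01
  push_neg at h01
  have h2 : 2 ≤ v.val := by omega
  refine ⟨h2, ?_⟩
  intro hpar
  have hne : v.val ≠ n - 1 := by omega
  have hk : (v.val - 1) + 2 < n := by omega
  exact shared_touched hn i hi hk (by omega) v (by omega) hv

include hn hi in
lemma untouched_spacing {v v' : Fin n}
    (hv : v ∈ untouchedSet (pathGraph n) std (tstr hn) i)
    (hv' : v' ∈ untouchedSet (pathGraph n) std (tstr hn) i)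
    (h : v.val + 2 = v'.val) : False := by
  obtain ⟨h2, hpar⟩ := untouched_val hn i hi hv
  have hvlt := v'.isLt
  have ha : v.val + 1 < n := by omega
  have hb : v.val + 1 + 1 < n := by omega
  have hp1 : par n v.val = v.val + 1 := by unfold par; rw [if_neg hpar]
  have hp2 : par n (v.val + 1) = v.val := by
    unfold par
    rw [if_pos (by omega)]
    omega
  obtain ⟨s, hs, hmv⟩ := all_claimed hn i hi (ed hn v.val) (ed_mem_edgeSet hn ha)
  have hvm : v ∈ ed hn v.val := (mem_ed_iff hn ha v).mpr (Or.inl rfl)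
  by_cases hse : s % 2 = 0
  · rw [untouched_iff] at hv
    exact hv s hs hse (hmv ▸ hvm)
  · obtain ⟨s', hs', hs'e, hmv'⟩ :=
      resp hn i hi s hs (by omega) v.val (v.val + 1) ha hb (by omega) hp1 hp2 hmv
    have hvm' : v' ∈ ed hn (v.val + 1) := (mem_ed_iff hn hb v').mpr (Or.inr (by omega))
    rw [untouched_iff] at hv'
    exact hv' s' hs' hs'e (hmv' ▸ hvm')

include hn hi in
lemma count_bound : 4 * untouchedCount (pathGraph n) std (tstr hn) i ≤ n + 1 := by
  classical
  set U := untouchedSet (pathGraph n) std (tstr hn) i with hUdef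
  have hcount : untouchedCount (pathGraph n) std (tstr hn) i = U.toFinset.card := by
    rw [untouchedCount, Nat.card_eq_fintype_card, Set.toFinset_card]
  rw [hcount]
  rcases Nat.eq_zero_or_pos U.toFinset.card with h0 | hpos
  · omega
  · obtain ⟨v0, hv0⟩ := Finset.card_pos.mp hpos
    rw [Set.mem_toFinset] at hv0
    have hn3 : 3 ≤ n := by
      have := (untouched_val hn i hi hv0).1
      have := v0.isLt
      omega
    have hinj : Set.InjOn (fun v : Fin n => (v.val - 2) / 4) U.toFinset := by
      intro x hx y hy hxy
      rw [Finset.mem_coe, Set.mem_toFinset] at hx hy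
      obtain ⟨hx2, hxp⟩ := untouched_val hn i hi hx
      obtain ⟨hy2, hyp⟩ := untouched_val hn i hi hy
      have hs1 : ¬(x.val + 2 = y.val) := fun h => untouched_spacing hn i hi hx hy h
      have hs2 : ¬(y.val + 2 = x.val) := fun h => untouched_spacing hn i hi hy hx h
      simp only at hxy
      have : x.val = y.val := by omega
      exact Fin.ext this
    have hmaps : ∀ v ∈ U.toFinset, (v.val - 2) / 4 ∈ Finset.range ((n - 3) / 4 + 1) := by
      intro v hv
      rw [Finset.mem_range]
      have := v.isLt
      omega
    have hcard := Finset.card_le_card_of_injOn _ hmaps hinj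
    rw [Finset.card_range] at hcard
    omega

end Game

end TIPath

/-- Theorem 5 (upper bound): on the path `Pₙ`, Toucher can guarantee at most
`(n + 1)/4` untouched vertices. -/
theorem toucher_guarantee_path
    (n : ℕ) (hn : 2 ≤ n) :
    ∃ t : Strategy (Fin n), Legal (pathGraph n) t ∧
      ∀ i : Strategy (Fin n), Legal (pathGraph n) i →
        (untouchedCount (pathGraph n) std t i : ℝ) ≤ ((n : ℝ) + 1) / 4 := by
  refine ⟨TIPath.tstr hn, TIPath.tstr_legal hn, ?_⟩
  intro i hi
  have h4 := TIPath.count_bound hn i hi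
  have h4' : (4 : ℝ) * (untouchedCount (pathGraph n) std (TIPath.tstr hn) i : ℝ) ≤
      (n : ℝ) + 1 := by
    have := (Nat.cast_le (α := ℝ)).mpr h4
    push_cast at this
    linarith
  linarith
end
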